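/- (Inequality (a2).) Suppose y_k ∈ {−1, +1} and y_k p̂_k ≤ 0 for every k = 1, …, m. Then for every a > 0, γ > 0 and every sequence u_1, …, u_m ∈ ℝ^d: Σ_{k=1}^{m} (|p̂_k| + a) ≤ (a/γ) Σ_{k=1}^{m} ℓ_{γ,k}(u_k) + (a²/(2γ²)) (b‖u_1‖² + c V_m + Σ_{k=1}^{m} (u_kᵀ x_k)²) + (1/2) Σ_{k=1}^{m} x_kᵀ D_k^{−1} x_k. -/

import Mathlib

set_option autoImplicit false

open Matrix Finset

noncomputable section

/-- `D_0 = (bc/(c-b)) I`, `D_k = (D_{k-1}⁻¹ + c⁻¹ I)⁻¹ + x_k x_kᵀ` for `k ≥ 1`. -/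
def lasecD (d : ℕ) (b c : ℝ) (x : ℕ → Fin d → ℝ) : ℕ → Matrix (Fin d) (Fin d) ℝ
  | 0 => (b * c / (c - b)) • (1 : Matrix (Fin d) (Fin d) ℝ)
  | k + 1 => ((lasecD d b c x k)⁻¹ + c⁻¹ • (1 : Matrix (Fin d) (Fin d) ℝ))⁻¹
      + vecMulVec (x (k + 1)) (x (k + 1))

/-- `e_0 = 0`, `e_k = (I + c⁻¹ D_{k-1})⁻¹ e_{k-1} + y_k x_k` for `k ≥ 1`. -/
def lasecE (d : ℕ) (b c : ℝ) (x : ℕ → Fin d → ℝ) (y : ℕ → ℝ) : ℕ → (Fin d → ℝ)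
  | 0 => 0
  | k + 1 => ((1 : Matrix (Fin d) (Fin d) ℝ) + c⁻¹ • lasecD d b c x k)⁻¹ *ᵥ
        lasecE d b c x y k + y (k + 1) • x (k + 1)

/-- The margin `p̂_k = x_kᵀ D_k⁻¹ (I + c⁻¹ D_{k-1})⁻¹ e_{k-1}`. -/
def lasecPhat (d : ℕ) (b c : ℝ) (x : ℕ → Fin d → ℝ) (y : ℕ → ℝ) (k : ℕ) : ℝ :=
  x k ⬝ᵥ ((lasecD d b c x k)⁻¹ *ᵥ
    (((1 : Matrix (Fin d) (Fin d) ℝ) + c⁻¹ • lasecD d b c x (k - 1))⁻¹ *ᵥ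
      lasecE d b c x y (k - 1)))


/-- The hinge loss `ℓ_{γ,k}(u) = max{0, γ - y_k uᵀ x_k}`. -/
def hinge (d : ℕ) (x : ℕ → Fin d → ℝ) (y : ℕ → ℝ) (γ : ℝ) (k : ℕ) (u : Fin d → ℝ) : ℝ :=
  max 0 (γ - y k * (u ⬝ᵥ x k))

/-! With `w_k = D_k⁻¹ e_k` the weight of the algorithm, `Φ_k(v) = ½ ‖v - w_k‖²_{D_k} ≥ 0` is a
potential. Adding the example `(x_k, y_k)` raises `Φ` by at most
`y_k p̂_k + ½ x_kᵀ D_k⁻¹ x_k - y_k vᵀ x_k + ½ (vᵀ x_k)²`, because `D ↦ eᵀ D⁻¹ e` is antitone.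
The forgetting step `D ↦ (D⁻¹ + c⁻¹ I)⁻¹` keeps the weight and replaces the `D`-norm by its infimal
convolution with `c ‖·‖²`, so moving the comparator from `v_{k-1}` to `v_k` costs
`(c/2) ‖v_k - v_{k-1}‖²`; the first forgetting step turns `D_0` into `b I`. Telescoping and
`Φ_m ≥ 0` bound the sum of the increments. On a mistake `|p̂_k| = -y_k p̂_k`, and for
`v_k = (a/γ) u_k` the hinge loss absorbs `a - y_k v_kᵀ x_k`. -/

namespace Matrix

variable {n : Type*} [Fintype n]

lemma IsHermitian.dotProduct_mulVec_comm {M : Matrix n n ℝ} (hM : M.IsHermitian) (v w : n → ℝ) :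
    v ⬝ᵥ (M *ᵥ w) = w ⬝ᵥ (M *ᵥ v) := by
  rw [dotProduct_mulVec, ← mulVec_transpose, show Mᵀ = M from hM, dotProduct_comm]

lemma smul_dotProduct_smul_self (r : ℝ) (u : n → ℝ) :
    (r • u) ⬝ᵥ (r • u) = r ^ 2 * ∑ i, u i ^ 2 := by
  simp only [dotProduct, Pi.smul_apply, smul_eq_mul, mul_sum]
  exact sum_congr rfl fun i _ => by ring

variable [DecidableEq n]

lemma PosDef.mulVec_inv_mulVec {M : Matrix n n ℝ} (hM : M.PosDef) (z : n → ℝ) :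
    M *ᵥ (M⁻¹ *ᵥ z) = z := by
  rw [mulVec_mulVec, mul_nonsing_inv _ hM.det_pos.ne'.isUnit, one_mulVec]

lemma inv_smul_one {r : ℝ} (hr : r ≠ 0) : (r • (1 : Matrix n n ℝ))⁻¹ = r⁻¹ • 1 :=
  inv_eq_left_inv (by rw [smul_mul_smul_comm, inv_mul_cancel₀ hr, one_mul, one_smul])

lemma PosDef.two_mul_dotProduct_le {M : Matrix n n ℝ} (hM : M.PosDef) (z w : n → ℝ) :
    2 * (z ⬝ᵥ w) ≤ w ⬝ᵥ (M *ᵥ w) + z ⬝ᵥ (M⁻¹ *ᵥ z) := by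
  have hq := hM.mulVec_inv_mulVec z
  have hsym := hM.isHermitian.dotProduct_mulVec_comm w (M⁻¹ *ᵥ z)
  have h := hM.posSemidef.dotProduct_mulVec_nonneg (w - M⁻¹ *ᵥ z)
  rw [hq] at hsym
  simp only [star_trivial, mulVec_sub, hq, dotProduct_sub, sub_dotProduct] at h
  rw [dotProduct_comm z w, dotProduct_comm z]
  linarith

lemma PosDef.dotProduct_inv_add_mulVec_le {A C : Matrix n n ℝ} (hA : A.PosDef)
    (hC : C.PosSemidef) (f : n → ℝ) : f ⬝ᵥ ((A + C)⁻¹ *ᵥ f) ≤ f ⬝ᵥ (A⁻¹ *ᵥ f) := by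
  have hq := (hA.add_posSemidef hC).mulVec_inv_mulVec f
  have hsplit : f ⬝ᵥ ((A + C)⁻¹ *ᵥ f) = ((A + C)⁻¹ *ᵥ f) ⬝ᵥ (A *ᵥ ((A + C)⁻¹ *ᵥ f))
      + ((A + C)⁻¹ *ᵥ f) ⬝ᵥ (C *ᵥ ((A + C)⁻¹ *ᵥ f)) := by
    rw [← dotProduct_add, ← add_mulVec, hq, dotProduct_comm]
  have hFY := hA.two_mul_dotProduct_le f ((A + C)⁻¹ *ᵥ f)
  have hCq := hC.dotProduct_mulVec_nonneg ((A + C)⁻¹ *ᵥ f)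
  rw [star_trivial] at hCq
  linarith

/-- The quadratic form of the parallel sum `(P⁻¹ + R⁻¹)⁻¹` is the infimal convolution of those
of `P` and `R`. -/
lemma PosDef.dotProduct_inv_add_inv_inv_mulVec_le {P R : Matrix n n ℝ} (hP : P.PosDef)
    (hR : R.PosDef) (r s : n → ℝ) :
    r ⬝ᵥ ((P⁻¹ + R⁻¹)⁻¹ *ᵥ r) ≤ s ⬝ᵥ (P *ᵥ s) + (r - s) ⬝ᵥ (R *ᵥ (r - s)) := by
  have hq := (hP.inv.add hR.inv).mulVec_inv_mulVec r
  set q := (P⁻¹ + R⁻¹)⁻¹ *ᵥ r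
  have hsplit : r ⬝ᵥ q = q ⬝ᵥ (P⁻¹ *ᵥ q) + q ⬝ᵥ (R⁻¹ *ᵥ q) := by
    rw [← dotProduct_add, ← add_mulVec, hq, dotProduct_comm]
  have hFYP := hP.two_mul_dotProduct_le q s
  have hFYR := hR.two_mul_dotProduct_le q (r - s)
  rw [dotProduct_sub, dotProduct_comm q r] at hFYR
  linarith

/-- The expanded form of `½ ‖v - M⁻¹ e‖²_M` (`quadPotential_eq`): the distance of a comparator `v`
from the weight `M⁻¹ e` of the algorithm in state `(M, e)`. -/
def quadPotential (M : Matrix n n ℝ) (e v : n → ℝ) : ℝ :=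
  e ⬝ᵥ (M⁻¹ *ᵥ e) / 2 - v ⬝ᵥ e + v ⬝ᵥ (M *ᵥ v) / 2

variable {M : Matrix n n ℝ}

lemma quadPotential_eq (hM : M.PosDef) (e v : n → ℝ) :
    quadPotential M e v = (v - M⁻¹ *ᵥ e) ⬝ᵥ (M *ᵥ (v - M⁻¹ *ᵥ e)) / 2 := by
  have hq := hM.mulVec_inv_mulVec e
  have hsym := hM.isHermitian.dotProduct_mulVec_comm v (M⁻¹ *ᵥ e)
  rw [hq] at hsym
  simp only [quadPotential, mulVec_sub, hq, dotProduct_sub, sub_dotProduct]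
  rw [dotProduct_comm (M⁻¹ *ᵥ e) e]
  linarith

lemma quadPotential_nonneg (hM : M.PosDef) (e v : n → ℝ) : 0 ≤ quadPotential M e v := by
  have h := hM.posSemidef.dotProduct_mulVec_nonneg (v - M⁻¹ *ᵥ e)
  rw [star_trivial] at h
  rw [quadPotential_eq hM]
  positivity

lemma quadPotential_add_vecMulVec_le {F : Matrix n n ℝ} (hF : F.PosDef) (x f v : n → ℝ) (t : ℝ) :
    quadPotential (F + vecMulVec x x) (f + t • x) v ≤ quadPotential F f v
      + t * (x ⬝ᵥ ((F + vecMulVec x x)⁻¹ *ᵥ f)) + t ^ 2 / 2 * (x ⬝ᵥ ((F + vecMulVec x x)⁻¹ *ᵥ x))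
      - t * (v ⬝ᵥ x) + (v ⬝ᵥ x) ^ 2 / 2 := by
  have hmono := hF.dotProduct_inv_add_mulVec_le (posSemidef_vecMulVec_self_star x) f
  have hsym := (hF.add_posSemidef (posSemidef_vecMulVec_self_star x)).inv.isHermitian
    |>.dotProduct_mulVec_comm f x
  simp only [star_trivial] at hmono hsym
  simp only [quadPotential, mulVec_add, mulVec_smul, add_mulVec, vecMulVec_mulVec, op_smul_eq_smul,
    dotProduct_add, add_dotProduct, dotProduct_smul, smul_dotProduct, smul_eq_mul, hsym]
  rw [dotProduct_comm x v]
  linarith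

/-- Forgetting step: passing from `(D, e)` to `((D⁻¹ + c⁻¹)⁻¹, (1 + c⁻¹ D)⁻¹ e)` keeps the weight
`D⁻¹ e`, so the potential only pays for the drift `v - w` of the comparator. -/
lemma quadPotential_forget_le {D : Matrix n n ℝ} (hD : D.PosDef) {c : ℝ} (hc : 0 < c)
    (e v w : n → ℝ) :
    quadPotential (D⁻¹ + c⁻¹ • 1)⁻¹ ((1 + c⁻¹ • D)⁻¹ *ᵥ e) v
      ≤ quadPotential D e w + c / 2 * ((v - w) ⬝ᵥ (v - w)) := by
  have hcI : (c • 1 : Matrix n n ℝ).PosDef := PosDef.one.smul hc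
  have hsum : (D⁻¹ + c⁻¹ • 1 : Matrix n n ℝ).PosDef := hD.inv.add (PosDef.one.smul (inv_pos.2 hc))
  have hA : (1 + c⁻¹ • D : Matrix n n ℝ).PosDef := PosDef.one.add (hD.smul (inv_pos.2 hc))
  have hfactor : D⁻¹ + c⁻¹ • 1 = D⁻¹ * (1 + c⁻¹ • D) := by
    rw [mul_add, mul_one, Matrix.mul_smul, nonsing_inv_mul _ hD.det_pos.ne'.isUnit]
  have hweight : (D⁻¹ + c⁻¹ • 1)⁻¹⁻¹ *ᵥ ((1 + c⁻¹ • D)⁻¹ *ᵥ e) = D⁻¹ *ᵥ e := by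
    rw [nonsing_inv_nonsing_inv _ hsum.det_pos.ne'.isUnit, hfactor,
      ← mulVec_mulVec, hA.mulVec_inv_mulVec]
  have hinf := hD.dotProduct_inv_add_inv_inv_mulVec_le hcI (v - D⁻¹ *ᵥ e) (w - D⁻¹ *ᵥ e)
  rw [inv_smul_one hc.ne', sub_sub_sub_cancel_right, smul_mulVec, one_mulVec, dotProduct_smul,
    smul_eq_mul] at hinf
  rw [quadPotential_eq hsum.inv, quadPotential_eq hD, hweight]
  linarith

end Matrix

section Lasec

variable {d : ℕ} {b c : ℝ} (x : ℕ → Fin d → ℝ) (y : ℕ → ℝ)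

lemma lasecD_posDef (hb : 0 < b) (hbc : b < c) (k : ℕ) : (lasecD d b c x k).PosDef := by
  have hc : 0 < c := hb.trans hbc
  induction k with
  | zero => exact PosDef.one.smul (div_pos (mul_pos hb hc) (sub_pos.2 hbc))
  | succ k ih =>
    exact (ih.inv.add (PosDef.one.smul (inv_pos.2 hc))).inv.add_posSemidef
      (posSemidef_vecMulVec_self_star _)

/-- The scale `bc/(c-b)` of `D₀` is chosen so that forgetting once turns it into `b I`. -/
lemma inv_lasecD_zero_add (hb : 0 < b) (hbc : b < c) :
    ((lasecD d b c x 0)⁻¹ + c⁻¹ • 1)⁻¹ = b • (1 : Matrix (Fin d) (Fin d) ℝ) := by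
  have hc : 0 < c := hb.trans hbc
  have hcb : c - b ≠ 0 := (sub_pos.2 hbc).ne'
  rw [lasecD, inv_smul_one (by positivity), ← add_smul,
    show (b * c / (c - b))⁻¹ + c⁻¹ = b⁻¹ by field_simp; ring, inv_smul_one (by positivity), inv_inv]

def lasecIncrement (d : ℕ) (b c : ℝ) (x : ℕ → Fin d → ℝ) (y : ℕ → ℝ) (k : ℕ) (v : Fin d → ℝ) :
    ℝ :=
  y k * lasecPhat d b c x y k + y k ^ 2 / 2 * (x k ⬝ᵥ ((lasecD d b c x k)⁻¹ *ᵥ x k))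
    - y k * (v ⬝ᵥ x k) + (v ⬝ᵥ x k) ^ 2 / 2

lemma quadPotential_lasec_succ_le (hb : 0 < b) (hbc : b < c) (k : ℕ) (v : Fin d → ℝ) :
    quadPotential (lasecD d b c x (k + 1)) (lasecE d b c x y (k + 1)) v
      ≤ quadPotential ((lasecD d b c x k)⁻¹ + c⁻¹ • 1)⁻¹
          ((1 + c⁻¹ • lasecD d b c x k)⁻¹ *ᵥ lasecE d b c x y k) v
        + lasecIncrement d b c x y (k + 1) v := by
  have hF := ((lasecD_posDef x hb hbc k).inv.add (PosDef.one.smul (inv_pos.2 (hb.trans hbc)))).inv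
  have h := quadPotential_add_vecMulVec_le hF (x (k + 1))
    ((1 + c⁻¹ • lasecD d b c x k)⁻¹ *ᵥ lasecE d b c x y k) v (y (k + 1))
  rw [lasecIncrement, lasecPhat, Nat.add_sub_cancel, lasecD.eq_2, lasecE.eq_2]
  linarith

lemma quadPotential_lasec_le (hb : 0 < b) (hbc : b < c) (v : ℕ → Fin d → ℝ) {n : ℕ}
    (hn : 1 ≤ n) :
    quadPotential (lasecD d b c x n) (lasecE d b c x y n) (v n)
      ≤ b / 2 * (v 1 ⬝ᵥ v 1) + c / 2 * ∑ k ∈ Icc 2 n, (v k - v (k - 1)) ⬝ᵥ (v k - v (k - 1))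
        + ∑ k ∈ Icc 1 n, lasecIncrement d b c x y k (v k) := by
  induction n, hn using Nat.le_induction with
  | base =>
    have h := quadPotential_lasec_succ_le x y hb hbc 0 (v 1)
    rw [inv_lasecD_zero_add x hb hbc] at h
    have h0 : quadPotential (b • 1) ((1 + c⁻¹ • lasecD d b c x 0)⁻¹ *ᵥ lasecE d b c x y 0) (v 1)
        = b / 2 * (v 1 ⬝ᵥ v 1) := by
      simp only [lasecE, mulVec_zero, quadPotential, dotProduct_zero, zero_div, sub_zero,
        smul_mulVec, one_mulVec, dotProduct_smul, smul_eq_mul, zero_add]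
      ring
    simp only [Icc_self, sum_singleton, Icc_eq_empty_of_lt one_lt_two, sum_empty]
    linarith
  | succ n hn ih =>
    have hforget := quadPotential_forget_le (lasecD_posDef x hb hbc n) (hb.trans hbc)
      (lasecE d b c x y n) (v (n + 1)) (v n)
    rw [sum_Icc_succ_top (by omega), sum_Icc_succ_top (by omega), Nat.add_sub_cancel]
    linarith [quadPotential_lasec_succ_le x y hb hbc n (v (n + 1))]

lemma abs_lasecPhat_add_le {k : ℕ} (hyk : y k = -1 ∨ y k = 1)
    (hmis : y k * lasecPhat d b c x y k ≤ 0) {a γ : ℝ} (ha : 0 < a) (hγ : 0 < γ)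
    (u : Fin d → ℝ) :
    |lasecPhat d b c x y k| + a
      ≤ a / γ * hinge d x y γ k u + x k ⬝ᵥ ((lasecD d b c x k)⁻¹ *ᵥ x k) / 2
        + a ^ 2 / (2 * γ ^ 2) * (u ⬝ᵥ x k) ^ 2 - lasecIncrement d b c x y k ((a / γ) • u) := by
  have hy_abs : |y k| = 1 := by rcases hyk with h | h <;> simp [h]
  have habs : |lasecPhat d b c x y k| = -(y k * lasecPhat d b c x y k) := by
    rw [← abs_of_nonpos hmis, abs_mul, hy_abs, one_mul]
  have hhinge : a - a / γ * (y k * (u ⬝ᵥ x k)) ≤ a / γ * hinge d x y γ k u :=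
    calc a - a / γ * (y k * (u ⬝ᵥ x k)) = a / γ * (γ - y k * (u ⬝ᵥ x k)) := by field_simp
      _ ≤ _ := mul_le_mul_of_nonneg_left (le_max_right _ _) (div_pos ha hγ).le
  have hsq : y k ^ 2 = 1 := by rw [← sq_abs, hy_abs, one_pow]
  simp only [lasecIncrement, smul_dotProduct, smul_eq_mul, hsq]
  linarith [show (a / γ * (u ⬝ᵥ x k)) ^ 2 / 2 = a ^ 2 / (2 * γ ^ 2) * (u ⬝ᵥ x k) ^ 2 by ring]

end Lasec

theorem lasec_a2_general (d : ℕ) (b c : ℝ) (hb : 0 < b) (hbc : b < c)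
    (m : ℕ) (hm : 1 ≤ m) (x : ℕ → Fin d → ℝ) (y : ℕ → ℝ)
    (hy : ∀ k ∈ Icc 1 m, y k = -1 ∨ y k = 1)
    (hmis : ∀ k ∈ Icc 1 m, y k * lasecPhat d b c x y k ≤ 0)
    (a γ : ℝ) (ha : 0 < a) (hγ : 0 < γ) (u : ℕ → Fin d → ℝ) :
    ∑ k ∈ Icc 1 m, (|lasecPhat d b c x y k| + a) ≤
      (a / γ) * ∑ k ∈ Icc 1 m, hinge d x y γ k (u k)
      + (a ^ 2 / (2 * γ ^ 2)) *
          (b * (∑ i, (u 1 i) ^ 2)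
            + c * ∑ k ∈ Icc 2 m, ∑ i, (u k i - u (k - 1) i) ^ 2
            + ∑ k ∈ Icc 1 m, (u k ⬝ᵥ x k) ^ 2)
      + (1 / 2) * ∑ k ∈ Icc 1 m, x k ⬝ᵥ ((lasecD d b c x k)⁻¹ *ᵥ x k) := by
  set v : ℕ → Fin d → ℝ := fun k => (a / γ) • u k
  have hregret := (quadPotential_nonneg (lasecD_posDef x hb hbc m) _ _).trans
    (quadPotential_lasec_le x y hb hbc v hm)
  have hterm k (hk : k ∈ Icc 1 m) :=
    abs_lasecPhat_add_le x y (hy k hk) (hmis k hk) ha hγ (u k)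
  have hv1 : v 1 ⬝ᵥ v 1 = (a / γ) ^ 2 * ∑ i, u 1 i ^ 2 := smul_dotProduct_smul_self _ _
  have hdrift : ∀ k, (v k - v (k - 1)) ⬝ᵥ (v k - v (k - 1))
      = (a / γ) ^ 2 * ∑ i, (u k i - u (k - 1) i) ^ 2 := fun k => by
    rw [← smul_sub, smul_dotProduct_smul_self]
    rfl
  rw [hv1, sum_congr rfl fun k _ => hdrift k, ← mul_sum] at hregret
  refine (sum_le_sum hterm).trans ?_
  simp only [sum_sub_distrib, sum_add_distrib, ← mul_sum, ← sum_div]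
  linear_combination hregret

/-- inequality (a2). -/
theorem lasec_a2 (d : ℕ) (hd : 1 ≤ d) (b c : ℝ) (hb : 0 < b) (hbc : b < c)
    (m : ℕ) (hm : 1 ≤ m) (x : ℕ → Fin d → ℝ) (y : ℕ → ℝ)
    (hy : ∀ k ∈ Icc 1 m, y k = -1 ∨ y k = 1)
    (hmis : ∀ k ∈ Icc 1 m, y k * lasecPhat d b c x y k ≤ 0)
    (a γ : ℝ) (ha : 0 < a) (hγ : 0 < γ) (u : ℕ → Fin d → ℝ) :
    ∑ k ∈ Icc 1 m, (|lasecPhat d b c x y k| + a) ≤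
      (a / γ) * ∑ k ∈ Icc 1 m, hinge d x y γ k (u k)
      + (a ^ 2 / (2 * γ ^ 2)) *
          (b * (∑ i, (u 1 i) ^ 2)
            + c * ∑ k ∈ Icc 2 m, ∑ i, (u k i - u (k - 1) i) ^ 2
            + ∑ k ∈ Icc 1 m, (u k ⬝ᵥ x k) ^ 2)
      + (1 / 2) * ∑ k ∈ Icc 1 m, x k ⬝ᵥ ((lasecD d b c x k)⁻¹ *ᵥ x k) :=
  lasec_a2_general d b c hb hbc m hm x y hy hmis a γ ha hγ u

end
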